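/- arXiv:2412.03696 — 5 statements merged into one kernel-verified Lean document; each statement's English description precedes it below -/
import Mathlib

section
/- Let N ≥ 1, let λ₁, …, λ_N be pairwise distinct real numbers, let n ∈ ℕ, and let z ∈ ℂ be non-real. Then the sum over all tuples (e₀, e₁, …, e_n) of pairwise distinct indices in {1, …, N} of the quantity (z − λ_{e₀})⁻² · [ ∏_{k=1}^{n} (λ_{e₀} − λ_{e_k})⁻¹ − ∏_{k=1}^{n} (z − λ_{e_k})⁻¹ ] equals zero. -/
/-!
For distinct nodes `ν₀, …, ν_n` and `w` off the nodes, the partial fraction expansion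
`∏ᵢ (w - νᵢ)⁻¹ = ∑ⱼ cⱼ (w - νⱼ)⁻¹`, with `cⱼ = ∏_{i ≠ j} (νⱼ - νᵢ)⁻¹`, can be differentiated at
`w = z`; comparing the two derivatives gives `∑ⱼ (z - νⱼ)⁻² (cⱼ - ∏_{i ≠ j} (z - νᵢ)⁻¹) = 0`.
Averaging the sum over ordered tuples over the `n + 1` choices of base point inside each tuple
reduces the theorem to this identity for the nodes `λ_{e₀}, …, λ_{e_n}`.
-/

open Finset

namespace Lagrange

theorem sum_nodalWeight_mul_inv_sub_eq_inv_prod {F ι : Type*} [Field F] [DecidableEq ι]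
    {s : Finset ι} {v : ι → F} (hvs : Set.InjOn v s) (hs : s.Nonempty) {x : F}
    (hx : ∀ i ∈ s, x ≠ v i) :
    ∑ i ∈ s, nodalWeight s v i * (x - v i)⁻¹ = (∏ i ∈ s, (x - v i))⁻¹ := by
  have h := eval_interpolate_not_at_node 1 hx
  simp only [interpolate_one hvs hs, Polynomial.eval_one, Pi.one_apply, mul_one,
    eval_nodal] at h
  exact eq_inv_of_mul_eq_one_right h.symm

theorem sum_inv_sub_sq_mul_nodalWeight_sub_prod_erase_eq_zero {𝕜 ι : Type*}
    [NontriviallyNormedField 𝕜] [DecidableEq ι] {s : Finset ι} {v : ι → 𝕜}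
    (hvs : Set.InjOn v s) {z : 𝕜} (hz : ∀ i ∈ s, z ≠ v i) :
    ∑ j ∈ s, ((z - v j)⁻¹) ^ 2 *
      (nodalWeight s v j - ∏ i ∈ s.erase j, (z - v i)⁻¹) = 0 := by
  obtain rfl | hs := s.eq_empty_or_nonempty
  · exact sum_empty
  have hderiv : ∀ j ∈ s, HasDerivAt (fun x => (x - v j)⁻¹) (-((z - v j)⁻¹) ^ 2) z := by
    intro j hj
    refine (((hasDerivAt_id z).sub_const (v j)).inv (sub_ne_zero.2 (hz j hj))).congr_deriv ?_
    rw [neg_div, one_div, inv_pow, id]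
  have hnodes : IsOpen {x | ∀ i ∈ s, x ≠ v i} := by
    convert (s.finite_toSet.image v).isClosed.isOpen_compl using 1
    ext x
    simp [eq_comm]
  have hpartial : (fun x => ∑ j ∈ s, nodalWeight s v j * (x - v j)⁻¹)
      =ᶠ[nhds z] fun x => ∏ i ∈ s, (x - v i)⁻¹ :=
    Filter.eventually_of_mem (hnodes.mem_nhds hz) fun x hx => by
      simp only [sum_nodalWeight_mul_inv_sub_eq_inv_prod hvs hs hx, prod_inv_distrib]
  have hsum := HasDerivAt.fun_sum fun j hj => (hderiv j hj).const_mul (nodalWeight s v j)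
  have hprod := HasDerivAt.fun_finsetProd hderiv
  have hderiv_eq := (hsum.congr_of_eventuallyEq hpartial.symm).unique hprod
  simp only [smul_eq_mul, mul_neg, sum_neg_distrib, neg_inj] at hderiv_eq
  rw [← sub_eq_zero, ← sum_sub_distrib] at hderiv_eq
  rw [← hderiv_eq]
  exact sum_congr rfl fun j _ => by ring

end Lagrange

theorem Fin.prod_univ_erase_eq_prod_succAbove {M : Type*} [CommMonoid M] {n : ℕ}
    (f : Fin (n + 1) → M) (j : Fin (n + 1)) :
    ∏ i ∈ univ.erase j, f i = ∏ k, f (j.succAbove k) := by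
  rw [← compl_singleton, ← Fin.image_succAbove_univ,
    prod_image Fin.succAbove_right_injective.injOn]

theorem Fintype.sum_embedding_perm_trans {ι α M : Type*} [Fintype ι] [DecidableEq ι]
    [Fintype α] [DecidableEq α] [AddCommMonoid M] (σ : Equiv.Perm ι) (F : (ι ↪ α) → M) :
    ∑ e : ι ↪ α, F (σ.toEmbedding.trans e) = ∑ e, F e :=
  Fintype.sum_equiv (Equiv.embeddingCongr σ.symm (Equiv.refl α)) _ _ fun _ => rfl

theorem Fintype.sum_embedding_eq_zero_of_sum_perm_trans_eq_zero {ι κ α M : Type*}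
    [Fintype ι] [DecidableEq ι] [Fintype α] [DecidableEq α] [Fintype κ] [Nonempty κ]
    [AddCommMonoid M] [IsAddTorsionFree M] (σ : κ → Equiv.Perm ι) (F : (ι ↪ α) → M)
    (h : ∀ e, ∑ j, F ((σ j).toEmbedding.trans e) = 0) :
    ∑ e, F e = 0 := by
  refine (nsmul_eq_zero_iff_right (Fintype.card_ne_zero (α := κ))).1 ?_
  calc Fintype.card κ • ∑ e, F e
      = ∑ j, ∑ e, F ((σ j).toEmbedding.trans e) := by
        simp [Fintype.sum_embedding_perm_trans]
    _ = 0 := by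
        rw [sum_comm]
        exact Finset.sum_eq_zero fun e _ => h e

theorem sum_residues_vanishes_general
    (N : ℕ) (lam : Fin N → ℝ) (hlam : Function.Injective lam)
    (n : ℕ) (z : ℂ) (hz : z.im ≠ 0) :
    ∑ e : Fin (n + 1) ↪ Fin N,
      ((z - (lam (e 0) : ℂ))⁻¹) ^ 2 *
        ((∏ k : Fin n, ((lam (e 0) : ℂ) - (lam (e k.succ) : ℂ))⁻¹) -
          ∏ k : Fin n, (z - (lam (e k.succ) : ℂ))⁻¹) = 0 := by
  -- `j.cycleRange.symm` sends `0 ↦ j` and `k.succ ↦ j.succAbove k`: it moves the base point to `j`.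
  refine Fintype.sum_embedding_eq_zero_of_sum_perm_trans_eq_zero
    (fun j : Fin (n + 1) => j.cycleRange.symm) _ fun e => ?_
  have hinj : Set.InjOn (fun i => (lam (e i) : ℂ)) (univ : Finset (Fin (n + 1))) :=
    (Complex.ofReal_injective.comp (hlam.comp e.injective)).injOn
  have hz' : ∀ i ∈ univ, z ≠ (lam (e i) : ℂ) := fun i _ h => hz (by simp [h])
  simpa [Lagrange.nodalWeight, Fin.prod_univ_erase_eq_prod_succAbove] using
    Lagrange.sum_inv_sub_sq_mul_nodalWeight_sub_prod_erase_eq_zero hinj hz'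

/-- Lemma 1 of the paper: for pairwise distinct reals `λ₁, …, λ_N` and non-real `z`,
the sum over all ordered `(n+1)`-tuples `(e₀, …, e_n)` of pairwise distinct indices of
`(z − λ_{e₀})⁻² [∏_{k=1}^n (λ_{e₀} − λ_{e_k})⁻¹ − ∏_{k=1}^n (z − λ_{e_k})⁻¹]` vanishes. -/
theorem sum_residues_vanishes
    (N : ℕ) (hN : 1 ≤ N) (lam : Fin N → ℝ) (hlam : Function.Injective lam)
    (n : ℕ) (z : ℂ) (hz : z.im ≠ 0) :
    ∑ e : Fin (n + 1) ↪ Fin N,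
      ((z - (lam (e 0) : ℂ))⁻¹) ^ 2 *
        ((∏ k : Fin n, ((lam (e 0) : ℂ) - (lam (e k.succ) : ℂ))⁻¹) -
          ∏ k : Fin n, (z - (lam (e k.succ) : ℂ))⁻¹) = 0 :=
  sum_residues_vanishes_general N lam hlam n z hz
end

section
/- Let n ∈ ℕ, let λ₀, λ₁, …, λ_n be pairwise distinct complex numbers, and let z be a complex number different from every λ_j. Then ∑_{j=0}^{n} (z − λ_j)⁻² · ∏_{k ≠ j} (λ_j − λ_k)⁻¹ = ( ∑_{j=0}^{n} (z − λ_j)⁻¹ ) · ∏_{k=0}^{n} (z − λ_k)⁻¹. -/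
open Finset Filter Topology Lagrange

/- Off the nodes, partial fractions give `∏ k (w − λ_k)⁻¹ = ∑ j c_j (w − λ_j)⁻¹` with the nodal
weights `c_j = ∏_{k ≠ j} (λ_j − λ_k)⁻¹`. Differentiating this identity at `z` yields
`−∑ j c_j (z − λ_j)⁻²` on the right and, by the logarithmic derivative,
`−(∑ j (z − λ_j)⁻¹) ∏ k (z − λ_k)⁻¹` on the left. -/

namespace Lagrange

variable {F ι : Type*} [Field F] [DecidableEq ι] {s : Finset ι} {v : ι → F} {x : F}

theorem sum_nodalWeight_mul_inv_sub_eq_prod_inv (hvs : Set.InjOn v s) (hs : s.Nonempty)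
    (hx : ∀ i ∈ s, x ≠ v i) :
    ∑ i ∈ s, nodalWeight s v i * (x - v i)⁻¹ = ∏ i ∈ s, (x - v i)⁻¹ := by
  have h := eval_interpolate_not_at_node 1 hx
  simp only [interpolate_one hvs hs, Polynomial.eval_one, Pi.one_apply, mul_one,
    eval_nodal] at h
  rw [prod_inv_distrib]
  exact eq_inv_of_mul_eq_one_right h.symm

end Lagrange

section Derivatives

variable {𝕜 ι : Type*} [NontriviallyNormedField 𝕜] {s : Finset ι} {v : ι → 𝕜} {z : 𝕜}

theorem hasDerivAt_inv_sub {a : 𝕜} (h : z ≠ a) :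
    HasDerivAt (fun w => (w - a)⁻¹) (-(z - a)⁻¹ ^ 2) z := by
  refine (((hasDerivAt_id z).sub_const a).fun_inv (sub_ne_zero_of_ne h)).congr_deriv ?_
  simp [div_eq_mul_inv, inv_pow]

theorem hasDerivAt_sum_mul_inv_sub (c : ι → 𝕜) (hz : ∀ i ∈ s, z ≠ v i) :
    HasDerivAt (fun w => ∑ i ∈ s, c i * (w - v i)⁻¹) (-∑ i ∈ s, (z - v i)⁻¹ ^ 2 * c i) z := by
  rw [← sum_neg_distrib]
  refine HasDerivAt.fun_sum fun i hi => ?_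
  refine ((hasDerivAt_inv_sub (hz i hi)).const_mul (c i)).congr_deriv ?_
  ring

theorem hasDerivAt_prod_inv_sub [DecidableEq ι] (hz : ∀ i ∈ s, z ≠ v i) :
    HasDerivAt (fun w => ∏ i ∈ s, (w - v i)⁻¹)
      (-((∑ i ∈ s, (z - v i)⁻¹) * ∏ i ∈ s, (z - v i)⁻¹)) z := by
  refine (HasDerivAt.fun_finsetProd fun i hi => hasDerivAt_inv_sub (hz i hi)).congr_deriv ?_
  rw [sum_mul, ← sum_neg_distrib]
  refine sum_congr rfl fun i hi => ?_
  rw [← mul_prod_erase s _ hi, smul_eq_mul]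
  ring

end Derivatives

/-- The residue-theorem identity behind Lemma 1: for pairwise distinct complex numbers
`λ₀, …, λ_n` and `z` different from every `λ_j`,
`∑_j (z − λ_j)⁻² ∏_{k ≠ j} (λ_j − λ_k)⁻¹ = (∑_j (z − λ_j)⁻¹) ∏_k (z − λ_k)⁻¹`. -/
theorem residue_sum_identity
    (n : ℕ) (lam : Fin (n + 1) → ℂ) (hlam : Function.Injective lam)
    (z : ℂ) (hz : ∀ j, z ≠ lam j) :
    ∑ j : Fin (n + 1),
        ((z - lam j)⁻¹) ^ 2 * ∏ k ∈ univ.erase j, (lam j - lam k)⁻¹ =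
      (∑ j : Fin (n + 1), (z - lam j)⁻¹) * ∏ k : Fin (n + 1), (z - lam k)⁻¹ := by
  have hz' : ∀ j ∈ univ, z ≠ lam j := fun j _ => hz j
  have hpartial : (fun w => ∑ j, nodalWeight univ lam j * (w - lam j)⁻¹)
      =ᶠ[𝓝 z] fun w => ∏ k, (w - lam k)⁻¹ := by
    filter_upwards [eventually_all.mpr fun j => eventually_ne_nhds (hz j)] with w hw
    exact sum_nodalWeight_mul_inv_sub_eq_prod_inv hlam.injOn univ_nonempty fun j _ => hw j
  have hderiv := ((hasDerivAt_sum_mul_inv_sub _ hz').congr_of_eventuallyEq hpartial.symm).unique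
    (hasDerivAt_prod_inv_sub hz')
  exact neg_inj.mp hderiv
end

section
/- Let N ≥ 1, let λ₁, …, λ_N be pairwise distinct real numbers, let n ∈ ℕ with n + 1 ≤ N, and let z be a complex number different from every λ_j. Then (n+1) · ∑_{(e₀, …, e_n) p.d.} (z − λ_{e₀})⁻¹ · ∏_{k=1}^{n} (λ_{e₀} − λ_{e_k})⁻¹ = ∑_{(e₀, …, e_n) p.d.} ∏_{k=0}^{n} (z − λ_{e_k})⁻¹, where both sums run over all ordered (n+1)-tuples of pairwise distinct indices in {1, …, N}. -/
/-!
Partial fractions write `∏ₖ (z - λ_{e k})⁻¹` as `∑ₘ (z - λ_{e m})⁻¹ ∏_{k ≠ m} (λ_{e m} - λ_{e k})⁻¹`.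
Summing over all injective tuples `e`, the term indexed by `m` contributes the same total for every
`m`, since precomposing `e` with the transposition of `0` and `m` turns it into the term indexed
by `0`. The `n + 1` equal totals give the left-hand side.
-/

open Finset

section PartialFractions

variable {K ι : Type*} [Field K]

def partialFractionTerm [Fintype ι] [DecidableEq ι] (v : ι → K) (z : K) (m : ι) : K :=
  (z - v m)⁻¹ * ∏ k ∈ univ.erase m, (v m - v k)⁻¹

theorem Finset.prod_inv_sub_eq_sum [DecidableEq ι] {s : Finset ι} (hs : s.Nonempty) {v : ι → K}
    (hv : Set.InjOn v s) {z : K} (hz : ∀ j ∈ s, z ≠ v j) :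
    ∏ j ∈ s, (z - v j)⁻¹ = ∑ j ∈ s, (z - v j)⁻¹ * ∏ i ∈ s.erase j, (v j - v i)⁻¹ := by
  -- the Lagrange basis polynomials of the nodes `v` sum to `1`; evaluate at `z`
  have hbasis : ∑ j ∈ s, ∏ i ∈ s.erase j, ((v j - v i)⁻¹ * (z - v i)) = 1 := by
    simpa [Lagrange.basis, Lagrange.basisDivisor, Polynomial.eval_prod,
      Polynomial.eval_finsetSum] using congrArg (Polynomial.eval z) (Lagrange.sum_basis hv hs)
  rw [← mul_one (∏ j ∈ s, _), ← hbasis, mul_sum]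
  refine sum_congr rfl fun j hj => ?_
  rw [← mul_prod_erase s _ hj, mul_assoc, ← prod_mul_distrib]
  congr 1
  refine prod_congr rfl fun i hi => ?_
  have : z - v i ≠ 0 := sub_ne_zero.mpr (hz i (mem_of_mem_erase hi))
  field_simp

variable [Fintype ι] [DecidableEq ι]

theorem prod_inv_sub_eq_sum_partialFractionTerm [Nonempty ι] {v : ι → K}
    (hv : Function.Injective v) {z : K} (hz : ∀ j, z ≠ v j) :
    ∏ k, (z - v k)⁻¹ = ∑ m, partialFractionTerm v z m :=
  prod_inv_sub_eq_sum univ_nonempty hv.injOn fun j _ => hz j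

theorem partialFractionTerm_comp_perm (v : ι → K) (z : K) (σ : Equiv.Perm ι) (m : ι) :
    partialFractionTerm (v ∘ σ) z m = partialFractionTerm v z (σ m) := by
  unfold partialFractionTerm
  congr 1
  exact prod_equiv σ (by simp [σ.injective.ne_iff]) fun _ _ => rfl

theorem partialFractionTerm_zero {n : ℕ} (v : Fin (n + 1) → K) (z : K) :
    partialFractionTerm v z 0 = (z - v 0)⁻¹ * ∏ k : Fin n, (v 0 - v k.succ)⁻¹ := by
  rw [partialFractionTerm, Fin.univ_succ, erase_cons, prod_map]
  rfl

end PartialFractions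

theorem Fintype.sum_embedding_eq_of_comp_perm {ι α β : Type*} [Fintype ι] [DecidableEq ι]
    [Fintype α] [AddCommMonoid β] (H : (ι ↪ α) → ι → β)
    (hH : ∀ e (σ : Equiv.Perm ι) m, H (σ.toEmbedding.trans e) m = H e (σ m)) (i j : ι) :
    ∑ e, H e i = ∑ e, H e j := by
  refine Fintype.sum_equiv (Equiv.embeddingCongr (Equiv.swap i j) (Equiv.refl α)) _ _ fun e => ?_
  have := hH e (Equiv.swap i j).symm j
  simp_all [Equiv.embeddingCongr, Function.Embedding.congr]

theorem tuple_sum_identity_general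
    (N : ℕ) (lam : Fin N → ℝ) (hlam : Function.Injective lam)
    (n : ℕ) (z : ℂ) (hz : ∀ j, z ≠ (lam j : ℂ)) :
    (n + 1 : ℂ) *
        ∑ e : Fin (n + 1) ↪ Fin N,
          (z - (lam (e 0) : ℂ))⁻¹ *
            ∏ k : Fin n, ((lam (e 0) : ℂ) - (lam (e k.succ) : ℂ))⁻¹ =
      ∑ e : Fin (n + 1) ↪ Fin N, ∏ k : Fin (n + 1), (z - (lam (e k) : ℂ))⁻¹ := by
  set v : (Fin (n + 1) ↪ Fin N) → Fin (n + 1) → ℂ := fun e k => lam (e k)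
  have hv (e) : Function.Injective (v e) :=
    Complex.ofReal_injective.comp (hlam.comp e.injective)
  have hterm (m) : ∑ e, partialFractionTerm (v e) z m = ∑ e, partialFractionTerm (v e) z 0 :=
    Fintype.sum_embedding_eq_of_comp_perm (fun e => partialFractionTerm (v e) z)
      (fun e σ m => partialFractionTerm_comp_perm (v e) z σ m) m 0
  calc (n + 1 : ℂ) * ∑ e, (z - v e 0)⁻¹ * ∏ k : Fin n, (v e 0 - v e k.succ)⁻¹
      = ∑ m : Fin (n + 1), ∑ e, partialFractionTerm (v e) z m := by
        simp [hterm, partialFractionTerm_zero]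
    _ = ∑ e, ∏ k, (z - v e k)⁻¹ := by
        rw [sum_comm]
        exact sum_congr rfl fun e _ =>
          (prod_inv_sub_eq_sum_partialFractionTerm (hv e) fun k => hz (e k)).symm

/-- The "few manipulations" identity from the `t → ∞` consistency check: for pairwise
distinct reals `λ₁, …, λ_N`, `n + 1 ≤ N`, and `z` different from every `λ_j`,
`(n+1) ∑_{p.d.} (z − λ_{e₀})⁻¹ ∏_{k=1}^n (λ_{e₀} − λ_{e_k})⁻¹
  = ∑_{p.d.} ∏_{k=0}^n (z − λ_{e_k})⁻¹`,
both sums running over ordered `(n+1)`-tuples of pairwise distinct indices. -/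
theorem tuple_sum_identity
    (N : ℕ) (hN : 1 ≤ N) (lam : Fin N → ℝ) (hlam : Function.Injective lam)
    (n : ℕ) (hn : n + 1 ≤ N) (z : ℂ) (hz : ∀ j, z ≠ (lam j : ℂ)) :
    (n + 1 : ℂ) *
        ∑ e : Fin (n + 1) ↪ Fin N,
          (z - (lam (e 0) : ℂ))⁻¹ *
            ∏ k : Fin n, ((lam (e 0) : ℂ) - (lam (e k.succ) : ℂ))⁻¹ =
      ∑ e : Fin (n + 1) ↪ Fin N, ∏ k : Fin (n + 1), (z - (lam (e k) : ℂ))⁻¹ :=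
  tuple_sum_identity_general N lam hlam n z hz
end

section
/- Let U ⊆ ℂ × ℝ be open, let g : ℂ × ℝ → ℂ, gA : ℂ → ℂ, and R : ℂ × ℝ → ℂ. Fix (z₀, t₀) ∈ U and suppose: (i) the subordination relation g(z, t) = gA(z − R(g(z, t), t)) holds for all (z, t) ∈ U; (ii) g has partial derivatives ∂_z g and ∂_t g at (z₀, t₀); (iii) R has partial derivatives ∂_g R (in its first argument) and ∂_t R (in its second argument) at the point (g(z₀, t₀), t₀), and is differentiable there; (iv) gA is differentiable at w₀ := z₀ − R(g(z₀, t₀), t₀). Then ∂_t g(z₀, t₀) = − ∂_t R(g(z₀, t₀), t₀) · ∂_z g(z₀, t₀). -/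
/-!
Differentiate the subordination relation `g = gA (z - R (g, t))` once in `z` and once in `t`
by the chain rule. With `c = gA'(w₀)` this gives `∂_z g = c (1 - ∂_g R ∂_z g)` and
`∂_t g = -c (∂_g R ∂_t g + ∂_t R)`. The first equation forces `1 + c ∂_g R ≠ 0`, and eliminating
`c` between the two leaves `∂_t g = -∂_t R ∂_z g`.
-/

open Filter Topology

theorem HasFDerivAt.apply_eq_partials {E : Type*} [NormedAddCommGroup E] [NormedSpace ℂ E]
    {R : ℂ × ℝ → E} {F : ℂ × ℝ →L[ℝ] E} {p : ℂ × ℝ} {Rg Rt : E} (hR : HasFDerivAt R F p)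
    (hRg : HasDerivAt (fun w : ℂ => R (w, p.2)) Rg p.1)
    (hRt : HasDerivAt (fun s : ℝ => R (p.1, s)) Rt p.2) (v : ℂ) (τ : ℝ) :
    F (v, τ) = v • Rg + τ • Rt := by
  have hF_left : F (v, 0) = v • Rg := by
    have hcomp : HasFDerivAt (fun w : ℂ => R (w, p.2)) (F.comp (.inl ℝ ℂ ℝ)) p.1 :=
      hR.comp p.1 (hasFDerivAt_prodMk_left p.1 p.2)
    have hunique := hcomp.unique (hRg.hasFDerivAt.restrictScalars ℝ)
    simpa using congrArg (fun L : ℂ →L[ℝ] E => L v) hunique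
  have hF_right : F (0, 1) = Rt :=
    (hR.comp_hasDerivAt p.2 ((hasDerivAt_const p.2 p.1).prodMk (hasDerivAt_id p.2))).unique hRt
  calc F (v, τ) = F (v, 0) + τ • F (0, 1) := by
        rw [← map_smul, ← map_add, Prod.smul_mk, smul_zero, Prod.mk_add_mk, add_zero, zero_add,
          smul_eq_mul, mul_one]
    _ = v • Rg + τ • Rt := by rw [hF_left, hF_right]

theorem HasFDerivAt.hasDerivAt_comp_graph {E : Type*} [NormedAddCommGroup E] [NormedSpace ℂ E]
    {R : ℂ × ℝ → E} {F : ℂ × ℝ →L[ℝ] E} {γ : ℝ → ℂ} {γ' : ℂ} {t : ℝ} {Rg Rt : E}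
    (hR : HasFDerivAt R F (γ t, t))
    (hRg : HasDerivAt (fun w : ℂ => R (w, t)) Rg (γ t))
    (hRt : HasDerivAt (fun s : ℝ => R (γ t, s)) Rt t) (hγ : HasDerivAt γ γ' t) :
    HasDerivAt (fun s : ℝ => R (γ s, s)) (γ' • Rg + Rt) t := by
  have hcomp := hR.comp_hasDerivAt_of_eq t (hγ.prodMk (hasDerivAt_id t)) rfl
  rwa [hR.apply_eq_partials hRg hRt, one_smul] at hcomp

section Subordination

variable {g : ℂ × ℝ → ℂ} {gA : ℂ → ℂ} {R : ℂ × ℝ → ℂ} {z₀ : ℂ} {t₀ : ℝ} {c : ℂ}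

theorem subordination_space_deriv_eq
    (hsub : ∀ᶠ p in 𝓝 (z₀, t₀), g p = gA (p.1 - R (g p, p.2)))
    (hc : HasDerivAt gA c (z₀ - R (g (z₀, t₀), t₀))) {gz Rg : ℂ}
    (hgz : HasDerivAt (fun w : ℂ => g (w, t₀)) gz z₀)
    (hRg : HasDerivAt (fun w : ℂ => R (w, t₀)) Rg (g (z₀, t₀))) :
    gz = c * (1 - Rg * gz) := by
  have hslice : (fun w : ℂ => g (w, t₀)) =ᶠ[𝓝 z₀] fun w => gA (w - R (g (w, t₀), t₀)) :=
    ((Continuous.prodMk_left t₀).tendsto z₀).eventually hsub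
  have hRz : HasDerivAt (fun w : ℂ => R (g (w, t₀), t₀)) (Rg * gz) z₀ :=
    (hRg.comp z₀ hgz :)
  have hinner : HasDerivAt (fun w : ℂ => w - R (g (w, t₀), t₀)) (1 - Rg * gz) z₀ :=
    (hasDerivAt_id z₀).sub hRz
  exact hgz.unique ((hc.comp z₀ hinner).congr_of_eventuallyEq hslice)

theorem subordination_time_deriv_eq
    (hsub : ∀ᶠ p in 𝓝 (z₀, t₀), g p = gA (p.1 - R (g p, p.2)))
    (hc : HasDerivAt gA c (z₀ - R (g (z₀, t₀), t₀))) {gt Rg Rt : ℂ}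
    (hgt : HasDerivAt (fun s : ℝ => g (z₀, s)) gt t₀)
    (hRg : HasDerivAt (fun w : ℂ => R (w, t₀)) Rg (g (z₀, t₀)))
    (hRt : HasDerivAt (fun s : ℝ => R (g (z₀, t₀), s)) Rt t₀)
    (hRdiff : DifferentiableAt ℝ R (g (z₀, t₀), t₀)) :
    gt = -(gt * Rg + Rt) * c := by
  have hslice : (fun s : ℝ => g (z₀, s)) =ᶠ[𝓝 t₀] fun s => gA (z₀ - R (g (z₀, s), s)) :=
    ((Continuous.prodMk_right z₀).tendsto t₀).eventually hsub
  have hinner : HasDerivAt (fun s : ℝ => z₀ - R (g (z₀, s), s)) (-(gt * Rg + Rt)) t₀ := by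
    simpa using (hRdiff.hasFDerivAt.hasDerivAt_comp_graph hRg hRt hgt).const_sub z₀
  have houter := (hc.hasFDerivAt.restrictScalars ℝ).comp_hasDerivAt t₀ hinner
  rw [ContinuousLinearMap.coe_restrictScalars', ContinuousLinearMap.toSpanSingleton_apply,
    smul_eq_mul] at houter
  exact hgt.unique (houter.congr_of_eventuallyEq hslice)

end Subordination

theorem eq_neg_mul_of_subordination_derivs {K : Type*} [Field K] {c gz gt Rg Rt : K}
    (hz : gz = c * (1 - Rg * gz)) (ht : gt = -(gt * Rg + Rt) * c) :
    gt = -Rt * gz := by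
  have hunit : 1 + c * Rg ≠ 0 := by
    intro h
    have hc : c = 0 := by linear_combination gz * h - hz
    simp [hc] at h
  refine mul_right_cancel₀ hunit ?_
  linear_combination ht + Rt * hz

/-- The generalized Burgers equation (Eq. (7) of the paper).  If the subordination
relation `g(z,t) = gA(z − R(g(z,t), t))` holds on an open set `U ∋ (z₀,t₀)`, `g` has
partial derivatives `gz = ∂_z g` and `gt = ∂_t g` at `(z₀,t₀)`, `R` has partial
derivatives `Rg = ∂_g R` and `Rt = ∂_t R` at `(g(z₀,t₀), t₀)` and is differentiable
there, and `gA` is differentiable at `w₀ = z₀ − R(g(z₀,t₀), t₀)`, then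
`∂_t g = − ∂_t R · ∂_z g` at `(z₀,t₀)`. -/
theorem generalized_burgers
    (U : Set (ℂ × ℝ)) (hU : IsOpen U)
    (g : ℂ × ℝ → ℂ) (gA : ℂ → ℂ) (R : ℂ × ℝ → ℂ)
    (z₀ : ℂ) (t₀ : ℝ) (hmem : (z₀, t₀) ∈ U)
    (hsub : ∀ p ∈ U, g p = gA (p.1 - R (g p, p.2)))
    (gz gt Rg Rt : ℂ)
    (hgz : HasDerivAt (fun w : ℂ => g (w, t₀)) gz z₀)
    (hgt : HasDerivAt (fun s : ℝ => g (z₀, s)) gt t₀)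
    (hRg : HasDerivAt (fun w : ℂ => R (w, t₀)) Rg (g (z₀, t₀)))
    (hRt : HasDerivAt (fun s : ℝ => R (g (z₀, t₀), s)) Rt t₀)
    (hRdiff : DifferentiableAt ℝ R (g (z₀, t₀), t₀))
    (hgA : DifferentiableAt ℂ gA (z₀ - R (g (z₀, t₀), t₀))) :
    gt = -Rt * gz := by
  have hsub_nhds : ∀ᶠ p in 𝓝 (z₀, t₀), g p = gA (p.1 - R (g p, p.2)) :=
    eventually_of_mem (hU.mem_nhds hmem) hsub
  have hc := hgA.hasDerivAt
  exact eq_neg_mul_of_subordination_derivs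
    (subordination_space_deriv_eq hsub_nhds hc hgz hRg)
    (subordination_time_deriv_eq hsub_nhds hc hgt hRg hRt hRdiff)
end

section
/- Let N ≥ 2, let λ₁, …, λ_N be pairwise distinct real numbers, and let i ∈ {1, …, N}. Then ∑_{k ≠ i} (λ_i − λ_k)⁻² · [ ∑_{j ≠ k} (λ_k − λ_j)⁻¹ − ∑_{j ≠ i} (λ_i − λ_j)⁻¹ ] = 2 ∑_{k ≠ i} (λ_k − λ_i)⁻³. -/
/-!
Splitting off the terms `j = i` and `j = k`, the bracket for a fixed `k ≠ i` equals
`2 (λ_k − λ_i)⁻¹ + ∑_{j ≠ i, k} (λ_i − λ_k) (λ_k − λ_j)⁻¹ (λ_i − λ_j)⁻¹`. After multiplying by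
`(λ_i − λ_k)⁻²` the first part gives the right-hand side, and the double sum of
`(λ_i − λ_k)⁻¹ (λ_k − λ_j)⁻¹ (λ_i − λ_j)⁻¹` over ordered pairs `k ≠ j` vanishes, because the summand
is antisymmetric in `(k, j)`.
-/

open Finset

theorem Finset.sum_sum_erase_eq_zero_of_antisymm {ι M : Type*} [DecidableEq ι] [AddCommMonoid M]
    (s : Finset ι) (f : ι → ι → M) (hf : ∀ a ∈ s, ∀ b ∈ s, a ≠ b → f a b + f b a = 0) :
    ∑ a ∈ s, ∑ b ∈ s.erase a, f a b = 0 := by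
  have mem {a b : ι} : (⟨a, b⟩ : (_ : ι) × ι) ∈ s.sigma s.erase ↔ a ∈ s ∧ b ≠ a ∧ b ∈ s := by
    simp
  rw [sum_sigma']
  refine sum_involution (fun p _ => ⟨p.2, p.1⟩) (fun ⟨a, b⟩ hp => ?_) (fun ⟨a, b⟩ hp _ => ?_)
    (fun ⟨a, b⟩ hp => ?_) (fun _ _ => rfl)
  all_goals obtain ⟨ha, hba, hb⟩ := mem.1 hp
  · exact hf a ha b hb hba.symm
  · exact fun h => hba (congrArg Sigma.fst h)
  · exact mem.2 ⟨hb, hba.symm, ha⟩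

theorem Finset.sum_erase_sub_sum_erase {ι G : Type*} [DecidableEq ι] [AddCommGroup G]
    {s : Finset ι} {i k : ι} (hi : i ∈ s) (hk : k ∈ s) (hik : i ≠ k) (f : ι → ι → G) :
    ∑ j ∈ s.erase k, f k j - ∑ j ∈ s.erase i, f i j =
      f k i - f i k + ∑ j ∈ (s.erase i).erase k, (f k j - f i j) := by
  rw [← add_sum_erase (s.erase k) (f k) (mem_erase.2 ⟨hik, hi⟩),
    ← add_sum_erase (s.erase i) (f i) (mem_erase.2 ⟨hik.symm, hk⟩), erase_right_comm,
    sum_sub_distrib]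
  abel

theorem inv_sub_mul_inv_sub_mul_inv_sub_add_swap {K : Type*} [Field K] (a b c : K) :
    (a - b)⁻¹ * (b - c)⁻¹ * (a - c)⁻¹ + (a - c)⁻¹ * (c - b)⁻¹ * (a - b)⁻¹ = 0 := by
  rw [← neg_sub b c, inv_neg]
  ring

theorem coulomb_order_t_identity_general
    (N : ℕ) (lam : Fin N → ℝ) (hlam : Function.Injective lam)
    (i : Fin N) :
    ∑ k ∈ univ.erase i,
        ((lam i - lam k)⁻¹) ^ 2 *
          ((∑ j ∈ univ.erase k, (lam k - lam j)⁻¹) -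
            ∑ j ∈ univ.erase i, (lam i - lam j)⁻¹) =
      2 * ∑ k ∈ univ.erase i, ((lam k - lam i)⁻¹) ^ 3 := by
  have sub_ne {a b : Fin N} (h : a ≠ b) : lam a - lam b ≠ 0 := sub_ne_zero.2 (hlam.ne h)
  have summand_eq : ∀ k ∈ univ.erase i, ((lam i - lam k)⁻¹) ^ 2 *
      ((∑ j ∈ univ.erase k, (lam k - lam j)⁻¹) - ∑ j ∈ univ.erase i, (lam i - lam j)⁻¹) =
      2 * ((lam k - lam i)⁻¹) ^ 3 + ∑ j ∈ (univ.erase i).erase k,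
        (lam i - lam k)⁻¹ * (lam k - lam j)⁻¹ * (lam i - lam j)⁻¹ := by
    intro k hk
    have hki := ne_of_mem_erase hk
    rw [sum_erase_sub_sum_erase (mem_univ i) (mem_univ k) hki.symm
      (fun k j => (lam k - lam j)⁻¹), mul_add, mul_sum]
    congr 1
    · rw [← neg_sub (lam k), inv_neg]
      ring
    · refine sum_congr rfl fun j hj => ?_
      have hjk := ne_of_mem_erase hj
      have hji := ne_of_mem_erase (mem_of_mem_erase hj)
      rw [inv_sub_inv (sub_ne hjk.symm) (sub_ne hji.symm), sub_sub_sub_cancel_right]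
      field_simp [sub_ne hki.symm]
  rw [sum_congr rfl summand_eq, sum_add_distrib, ← mul_sum,
    sum_sum_erase_eq_zero_of_antisymm _ _ fun k _ j _ _ =>
      inv_sub_mul_inv_sub_mul_inv_sub_add_swap _ _ _, add_zero]

/-- The key order-`t` identity of the SI: for pairwise distinct reals `λ₁, …, λ_N`
and any index `i`,
`∑_{k≠i} (λ_i − λ_k)⁻² [∑_{j≠k} (λ_k − λ_j)⁻¹ − ∑_{j≠i} (λ_i − λ_j)⁻¹]
  = 2 ∑_{k≠i} (λ_k − λ_i)⁻³`. -/
theorem coulomb_order_t_identity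
    (N : ℕ) (hN : 2 ≤ N) (lam : Fin N → ℝ) (hlam : Function.Injective lam)
    (i : Fin N) :
    ∑ k ∈ univ.erase i,
        ((lam i - lam k)⁻¹) ^ 2 *
          ((∑ j ∈ univ.erase k, (lam k - lam j)⁻¹) -
            ∑ j ∈ univ.erase i, (lam i - lam j)⁻¹) =
      2 * ∑ k ∈ univ.erase i, ((lam k - lam i)⁻¹) ^ 3 :=
  coulomb_order_t_identity_general N lam hlam i
end
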